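/- arXiv:1704.04309 — 5 statements merged into one kernel-verified Lean document; each statement's English description precedes it below -/
import Mathlib

section
/- The reflection equation holds: with corner weight c(i;j) = δ_{i,1-j} and the stochastic six-vertex weights w_u, for all fixed i_1,i_2,j_1,j_2 ∈ {0,1}: Σ_{k_1,k_2 ∈ {0,1}} w_{a_y/a_x}(i_1,i_2;k_1,k_2)·w_{a_x a_y}(k_2, 1-k_1; 1-j_2, j_1) = Σ_{ℓ_1,ℓ_2 ∈ {0,1}} w_{a_x a_y}(i_1, 1-i_2; 1-ℓ_1, ℓ_2)·w_{a_y/a_x}(ℓ_2, ℓ_1; j_2, j_1). -/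
/-- The stochastic six-vertex weight `w_u(i₁,i₂;j₁,j₂)` with spectral parameter `u`
and asymmetry parameter `t`. -/
noncomputable def svWeight (t u : ℝ) (i₁ i₂ j₁ j₂ : Fin 2) : ℝ :=
  if i₁ = 0 ∧ i₂ = 0 ∧ j₁ = 0 ∧ j₂ = 0 then 1
  else if i₁ = 1 ∧ i₂ = 1 ∧ j₁ = 1 ∧ j₂ = 1 then 1
  else if i₁ = 1 ∧ i₂ = 0 ∧ j₁ = 1 ∧ j₂ = 0 then (1 - u) / (1 - t * u)
  else if i₁ = 0 ∧ i₂ = 1 ∧ j₁ = 0 ∧ j₂ = 1 then t * (1 - u) / (1 - t * u)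
  else if i₁ = 1 ∧ i₂ = 0 ∧ j₁ = 0 ∧ j₂ = 1 then (1 - t) * u / (1 - t * u)
  else if i₁ = 0 ∧ i₂ = 1 ∧ j₁ = 1 ∧ j₂ = 0 then (1 - t) / (1 - t * u)
  else 0

/-- The reflection equation (with the corner weight `c(i;j) = δ_{i,1-j}` already
eliminated) for the stochastic six-vertex weights. -/
theorem svWeight_reflection (t ax ay : ℝ) (hax : ax ≠ 0)
    (h1 : 1 - t * (ay / ax) ≠ 0) (h2 : 1 - t * (ax * ay) ≠ 0)
    (i₁ i₂ j₁ j₂ : Fin 2) :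
    ∑ k₁ : Fin 2, ∑ k₂ : Fin 2,
        svWeight t (ay / ax) i₁ i₂ k₁ k₂ *
          svWeight t (ax * ay) k₂ (1 - k₁) (1 - j₂) j₁
      = ∑ l₁ : Fin 2, ∑ l₂ : Fin 2,
          svWeight t (ax * ay) i₁ (1 - i₂) (1 - l₁) l₂ *
            svWeight t (ay / ax) l₂ l₁ j₂ j₁ := by
  fin_cases i₁ <;> fin_cases i₂ <;> fin_cases j₁ <;> fin_cases j₂ <;>
    simp [svWeight, Fin.sum_univ_two] <;> field_simp <;> ring
end

section
/- Let p(x) = (−t^{1+x}; t²)_∞ / (−t^{x}; t²)_∞ for t ∈ (0,1). Then p(x)·p(x+1) = 1/(1 + t^x), p is increasing in x, and p(x) → 0 as x → −∞. -/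
/-!
Write `s = t²` and `c = tˣ`, so that `p(x) = (−tc; s)_∞ / (−c; s)_∞` and `p(x+1)` has numerator
`(−sc; s)_∞`. The product `p(x) p(x+1)` telescopes to `(−sc; s)_∞ / (−c; s)_∞ = 1/(1+c)`.
For `0 ≤ u ≤ 1` the ratio `c ↦ (−uc; s)_∞ / (−c; s)_∞` decreases, factor by factor, in `c ≥ 0`;
with `u = t` and `c = tˣ` decreasing in `x`, this makes `p` increasing. Finally
`p(x)² ≤ p(x) p(x+1) = 1/(1+tˣ) → 0` as `x → −∞`.
-/

open Filter

/-- Infinite q-Pochhammer symbol `(a; q)_∞ = ∏_{k≥0} (1 - a qᵏ)`. -/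
noncomputable def qPochInf (a q : ℝ) : ℝ := ∏' k : ℕ, (1 - a * q ^ k)

/-- `p(x) = (−t^{1+x}; t²)_∞ / (−t^{x}; t²)_∞`. -/
noncomputable def pFun (t x : ℝ) : ℝ :=
  qPochInf (-(t ^ (1 + x))) (t ^ 2) / qPochInf (-(t ^ x)) (t ^ 2)

open Topology

lemma hasProd_le_of_nonneg {ι : Type*} {f g : ι → ℝ} {a b : ℝ} (hf0 : ∀ i, 0 ≤ f i)
    (hfg : ∀ i, f i ≤ g i) (hf : HasProd f a) (hg : HasProd g b) : a ≤ b :=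
  le_of_tendsto_of_tendsto' hf hg fun _ =>
    Finset.prod_le_prod (fun i _ => hf0 i) (fun i _ => hfg i)

lemma qPochInf_neg (a q : ℝ) : qPochInf (-a) q = ∏' k : ℕ, (1 + a * q ^ k) := by
  simp only [qPochInf, neg_mul, sub_neg_eq_add]

lemma multipliable_one_add_mul_pow (a : ℝ) {q : ℝ} (hq0 : 0 ≤ q) (hq1 : q < 1) :
    Multipliable fun k : ℕ => 1 + a * q ^ k :=
  Real.multipliable_one_add_of_summable ((summable_geometric_of_lt_one hq0 hq1).mul_left a)

lemma one_le_qPochInf_neg {a q : ℝ} (ha : 0 ≤ a) (hq0 : 0 ≤ q) (hq1 : q < 1) :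
    1 ≤ qPochInf (-a) q := by
  rw [qPochInf_neg]
  exact hasProd_le_of_nonneg (fun _ => zero_le_one)
    (fun k => le_add_of_nonneg_right (by positivity)) hasProd_one
    (multipliable_one_add_mul_pow a hq0 hq1).hasProd

lemma qPochInf_neg_pos {a q : ℝ} (ha : 0 ≤ a) (hq0 : 0 ≤ q) (hq1 : q < 1) :
    0 < qPochInf (-a) q :=
  one_pos.trans_le (one_le_qPochInf_neg ha hq0 hq1)

lemma qPochInf_neg_eq_one_add_mul (a : ℝ) {q : ℝ} (hq0 : 0 ≤ q) (hq1 : q < 1) :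
    qPochInf (-a) q = (1 + a) * qPochInf (-(a * q)) q := by
  have hshift : Multipliable fun k : ℕ => 1 + a * q ^ (k + 1) := by
    refine (multipliable_one_add_mul_pow (a * q) hq0 hq1).congr fun k => ?_
    ring
  rw [qPochInf_neg, qPochInf_neg, tprod_eq_zero_mul' (f := fun k => 1 + a * q ^ k) hshift,
    pow_zero, mul_one]
  congr 1
  exact tprod_congr fun k => by ring

lemma qPochInf_neg_mul_div_antitoneOn {u q : ℝ} (hu0 : 0 ≤ u) (hu1 : u ≤ 1) (hq0 : 0 ≤ q)
    (hq1 : q < 1) :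
    AntitoneOn (fun a => qPochInf (-(u * a)) q / qPochInf (-a) q) (Set.Ici 0) := by
  intro b (hb : 0 ≤ b) a (ha : 0 ≤ a) hba
  have hm (c : ℝ) := multipliable_one_add_mul_pow c hq0 hq1
  rw [div_le_div_iff₀ (qPochInf_neg_pos ha hq0 hq1) (qPochInf_neg_pos hb hq0 hq1),
    qPochInf_neg, qPochInf_neg, qPochInf_neg, qPochInf_neg,
    ← (hm _).tprod_mul (hm _), ← (hm _).tprod_mul (hm _)]
  refine hasProd_le_of_nonneg (fun k => by positivity) (fun k => ?_)
    ((hm _).mul (hm _)).hasProd ((hm _).mul (hm _)).hasProd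
  -- the two sides differ by `(1 - u) (a - b) qᵏ ≥ 0`
  have hqk : 0 ≤ q ^ k := pow_nonneg hq0 k
  nlinarith [mul_nonneg (mul_nonneg (sub_nonneg.2 hu1) (sub_nonneg.2 hba)) hqk]

lemma tendsto_zero_of_monotone_of_mul_add_one {f g : ℝ → ℝ} {l : Filter ℝ}
    (hf0 : ∀ x, 0 ≤ f x) (hf : Monotone f) (hfg : ∀ x, f x * f (x + 1) = g x)
    (hg : Tendsto g l (𝓝 0)) : Tendsto f l (𝓝 0) := by
  have hsq : Tendsto (fun x => f x ^ 2) l (𝓝 0) := by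
    refine squeeze_zero (fun x => sq_nonneg _) (fun x => ?_) hg
    rw [sq, ← hfg]
    exact mul_le_mul_of_nonneg_left (hf (by linarith)) (hf0 x)
  have hsqrt := (Real.continuous_sqrt.tendsto 0).comp hsq
  rw [Real.sqrt_zero] at hsqrt
  convert hsqrt using 1
  funext x
  simp [Real.sqrt_sq (hf0 x)]

lemma pFun_eq {t : ℝ} (ht0 : 0 < t) (x : ℝ) :
    pFun t x = qPochInf (-(t * t ^ x)) (t ^ 2) / qPochInf (-(t ^ x)) (t ^ 2) := by
  rw [pFun, Real.rpow_add ht0, Real.rpow_one]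

lemma pFun_pos {t : ℝ} (ht0 : 0 < t) (ht1 : t < 1) (x : ℝ) : 0 < pFun t x := by
  have hs1 : t ^ 2 < 1 := pow_lt_one₀ ht0.le ht1 two_ne_zero
  rw [pFun_eq ht0]
  exact div_pos (qPochInf_neg_pos (by positivity) (by positivity) hs1)
    (qPochInf_neg_pos (by positivity) (by positivity) hs1)

lemma pFun_mul_pFun_add_one {t : ℝ} (ht0 : 0 < t) (ht1 : t < 1) (x : ℝ) :
    pFun t x * pFun t (x + 1) = 1 / (1 + t ^ x) := by
  have hs1 : t ^ 2 < 1 := pow_lt_one₀ ht0.le ht1 two_ne_zero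
  have hnum : t * (t * t ^ x) = t ^ x * t ^ 2 := by ring
  rw [pFun_eq ht0, pFun_eq ht0, Real.rpow_add_one ht0.ne', mul_comm _ t, hnum,
    qPochInf_neg_eq_one_add_mul (t ^ x) (by positivity) hs1]
  have hN := qPochInf_neg_pos (a := t * t ^ x) (by positivity) (by positivity) hs1
  have hM := qPochInf_neg_pos (a := t ^ x * t ^ 2) (by positivity) (by positivity) hs1
  generalize qPochInf (-(t * t ^ x)) (t ^ 2) = N at hN ⊢
  generalize qPochInf (-(t ^ x * t ^ 2)) (t ^ 2) = M at hM ⊢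
  have hc : 0 < 1 + t ^ x := by positivity
  field_simp

lemma pFun_monotone {t : ℝ} (ht0 : 0 < t) (ht1 : t < 1) : Monotone (pFun t) := by
  intro x y hxy
  simp only [pFun_eq ht0]
  exact qPochInf_neg_mul_div_antitoneOn ht0.le ht1.le (by positivity)
    (pow_lt_one₀ ht0.le ht1 two_ne_zero) (Real.rpow_nonneg ht0.le y)
    (Real.rpow_nonneg ht0.le x) (Real.rpow_le_rpow_of_exponent_ge ht0 ht1.le hxy)

/-- For `t ∈ (0,1)`: `p(x)p(x+1) = 1/(1+tˣ)`, `p` is increasing, and `p(x) → 0`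
as `x → −∞`. -/
theorem pFun_properties (t : ℝ) (ht0 : 0 < t) (ht1 : t < 1) :
    (∀ x : ℝ, pFun t x * pFun t (x + 1) = 1 / (1 + t ^ x)) ∧
    Monotone (pFun t) ∧
    Tendsto (pFun t) atBot (nhds 0) := by
  have hlim : Tendsto (fun x : ℝ => 1 / (1 + t ^ x)) atBot (𝓝 0) := by
    simpa only [one_div, Pi.inv_def] using (tendsto_atTop_add_const_left _ 1
      (tendsto_rpow_atBot_of_base_lt_one t ht0 ht1)).inv_tendsto_atTop
  exact ⟨pFun_mul_pFun_add_one ht0 ht1, pFun_monotone ht0 ht1,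
    tendsto_zero_of_monotone_of_mul_add_one (fun x => (pFun_pos ht0 ht1 x).le)
      (pFun_monotone ht0 ht1) (pFun_mul_pFun_add_one ht0 ht1) hlim⟩
end

section
/- Let P(x) be a function satisfying P(x)·P(x+1) = N(x) for all x, where N(x) = Π_{j ∈ S} (1 + t^{x+j}) for a finite set S ⊂ Z and t ∈ (0,1), and P(x) → 1 as x → +∞. Then P(x) = Π_{j ∈ S} (−t^{x+j}; t²)_∞ / (−t^{x+j+1}; t²)_∞. -/
open Filter

/-!
Since `(−a; q)_∞ = (1 + a) (−aq; q)_∞`, each factor `(−t^y; t²)_∞ / (−t^{y+1}; t²)_∞` of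
the right-hand side `Q` telescopes to give `Q(x) Q(x+1) = N(x)`, and `Q(x) → 1` because
`(a; q)_∞ → 1` as `a → 0`. The quotient `R = P / Q` then satisfies `R(x) R(x+1) = 1`, so it is
2-periodic, and a periodic function with a limit at `+∞` is constant; hence `R ≡ 1`.
-/

open Topology

namespace qPochInf

variable {a q : ℝ}

lemma summable_norm_mul_pow (a : ℝ) (hq : |q| < 1) :
    Summable fun k : ℕ => ‖-(a * q ^ k)‖ := by
  simpa [abs_mul, abs_pow] using (summable_geometric_of_lt_one (abs_nonneg q) hq).mul_left |a|

lemma multipliable (a : ℝ) (hq : |q| < 1) : Multipliable fun k : ℕ => 1 - a * q ^ k := by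
  simpa [sub_eq_add_neg] using multipliable_one_add_of_summable (summable_norm_mul_pow a hq)

lemma eq_one_sub_mul (a : ℝ) (hq : |q| < 1) : qPochInf a q = (1 - a) * qPochInf (a * q) q := by
  have hshift : (fun k : ℕ => 1 - a * q ^ (k + 1)) = fun k => 1 - a * q * q ^ k := by
    ext k; ring
  rw [qPochInf, tprod_eq_zero_mul' (hshift ▸ multipliable (a * q) hq), hshift, pow_zero, mul_one,
    qPochInf]

lemma ne_zero (hq : |q| < 1) (h : ∀ k : ℕ, a * q ^ k ≠ 1) : qPochInf a q ≠ 0 := by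
  have := tprod_one_add_ne_zero_of_summable (fun k => ?_) (summable_norm_mul_pow a hq)
  · simpa only [qPochInf, sub_eq_add_neg] using this
  · rw [← sub_eq_add_neg, sub_ne_zero]
    exact (h k).symm

lemma abs_sub_one_le (a : ℝ) (hq : |q| < 1) :
    |qPochInf a q - 1| ≤ Real.exp (|a| / (1 - |q|)) - 1 := by
  have hsum : HasSum (fun k : ℕ => ‖-(a * q ^ k)‖) (|a| / (1 - |q|)) := by
    simpa [abs_mul, abs_pow, div_eq_mul_inv] using
      (hasSum_geometric_of_lt_one (abs_nonneg q) hq).mul_left |a|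
  have hprod := (multipliable a hq).hasProd
  refine le_of_tendsto' ((continuous_abs.comp (continuous_sub_right 1)).tendsto _ |>.comp hprod)
    fun s => ?_
  calc |∏ k ∈ s, (1 - a * q ^ k) - 1|
      ≤ Real.exp (∑ k ∈ s, ‖-(a * q ^ k)‖) - 1 := by
        simpa [sub_eq_add_neg] using Finset.norm_prod_one_add_sub_one_le s fun k => -(a * q ^ k)
    _ ≤ Real.exp (|a| / (1 - |q|)) - 1 := by
        gcongr
        exact hsum.summable.sum_le_tsum s (fun _ _ => norm_nonneg _) |>.trans hsum.tsum_eq.le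

lemma tendsto_nhds_zero (hq : |q| < 1) : Tendsto (qPochInf · q) (𝓝 0) (𝓝 1) := by
  rw [tendsto_iff_norm_sub_tendsto_zero]
  have hbound : Tendsto (fun a : ℝ => Real.exp (|a| / (1 - |q|)) - 1) (𝓝 0) (𝓝 0) := by
    have : Continuous fun a : ℝ => Real.exp (|a| / (1 - |q|)) - 1 := by fun_prop
    simpa using this.tendsto 0
  exact squeeze_zero (fun _ => norm_nonneg _) (fun a => abs_sub_one_le a hq) hbound

end qPochInf

lemma Function.Periodic.eq_of_tendsto_atTop {α : Type*} [TopologicalSpace α] [T2Space α]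
    {f : ℝ → α} {c : ℝ} {a : α} (hf : Function.Periodic f c) (hc : 0 < c)
    (h : Tendsto f atTop (𝓝 a)) (x : ℝ) : f x = a := by
  have hseq : Tendsto (fun n : ℕ => x + n * c) atTop atTop :=
    tendsto_atTop_add_const_left _ x (tendsto_natCast_atTop_atTop.atTop_mul_const hc)
  refine tendsto_nhds_unique tendsto_const_nhds ((h.comp hseq).congr fun n => ?_)
  exact hf.nat_mul n x

lemma periodic_two_of_mul_add_one_eq_one {M : Type*} [Monoid M] {f : ℝ → M}
    (h : ∀ x, f x * f (x + 1) = 1) : Function.Periodic f 2 := fun x => by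
  calc f (x + 2) = f x * f (x + 1) * f (x + 1 + 1) := by
        rw [h, one_mul, add_assoc, one_add_one_eq_two]
    _ = f x := by rw [mul_assoc, h, mul_one]

lemma eq_of_mul_add_one_eq {K : Type*} [NormedField K] {f g : ℝ → K} (hg : ∀ x, g x ≠ 0)
    (hfg : ∀ x, f x * f (x + 1) = g x * g (x + 1)) (hf1 : Tendsto f atTop (𝓝 1))
    (hg1 : Tendsto g atTop (𝓝 1)) : f = g := by
  have hratio : ∀ x, (f / g) x * (f / g) (x + 1) = 1 := fun x => by
    rw [Pi.div_apply, Pi.div_apply, div_mul_div_comm, hfg, div_self (mul_ne_zero (hg x) (hg _))]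
  have hlim : Tendsto (f / g) atTop (𝓝 1) := by simpa using hf1.div hg1 one_ne_zero
  funext x
  exact (div_eq_one_iff_eq (hg x)).mp
    ((periodic_two_of_mul_add_one_eq_one hratio).eq_of_tendsto_atTop two_pos hlim x)

section RpowBase

variable {t : ℝ}

lemma abs_sq_lt_one (ht0 : 0 ≤ t) (ht1 : t < 1) : |t ^ 2| < 1 := by
  rw [abs_of_nonneg (by positivity)]
  nlinarith

lemma qPochInf_neg_rpow_eq (ht0 : 0 < t) (ht1 : t < 1) (y : ℝ) :
    qPochInf (-(t ^ y)) (t ^ 2) = (1 + t ^ y) * qPochInf (-(t ^ (y + 2))) (t ^ 2) := by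
  rw [qPochInf.eq_one_sub_mul _ (abs_sq_lt_one ht0.le ht1), sub_neg_eq_add, neg_mul,
    ← Real.rpow_two, ← Real.rpow_add ht0]

lemma qPochInf_neg_rpow_ne_zero (ht0 : 0 ≤ t) (ht1 : t < 1) (y : ℝ) :
    qPochInf (-(t ^ y)) (t ^ 2) ≠ 0 :=
  qPochInf.ne_zero (abs_sq_lt_one ht0 ht1) fun k => by
    have : 0 ≤ t ^ y * (t ^ 2) ^ k := by positivity
    rw [neg_mul]
    linarith

lemma tendsto_qPochInf_neg_rpow (ht0 : 0 ≤ t) (ht1 : t < 1) :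
    Tendsto (fun y : ℝ => qPochInf (-(t ^ y)) (t ^ 2)) atTop (𝓝 1) :=
  (qPochInf.tendsto_nhds_zero (abs_sq_lt_one ht0 ht1)).comp <| by
    simpa using (tendsto_rpow_atTop_of_base_lt_one t (by linarith) ht1).neg

noncomputable def qPochInfRatio (t y : ℝ) : ℝ :=
  qPochInf (-(t ^ y)) (t ^ 2) / qPochInf (-(t ^ (y + 1))) (t ^ 2)

lemma qPochInfRatio_mul_add_one (ht0 : 0 < t) (ht1 : t < 1) (y : ℝ) :
    qPochInfRatio t y * qPochInfRatio t (y + 1) = 1 + t ^ y := by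
  have h1 := qPochInf_neg_rpow_ne_zero ht0.le ht1 (y + 1)
  have h2 := qPochInf_neg_rpow_ne_zero ht0.le ht1 (y + 2)
  rw [qPochInfRatio, qPochInfRatio, add_assoc, one_add_one_eq_two, qPochInf_neg_rpow_eq ht0 ht1]
  field_simp

lemma qPochInfRatio_ne_zero (ht0 : 0 ≤ t) (ht1 : t < 1) (y : ℝ) : qPochInfRatio t y ≠ 0 :=
  div_ne_zero (qPochInf_neg_rpow_ne_zero ht0 ht1 y) (qPochInf_neg_rpow_ne_zero ht0 ht1 (y + 1))

lemma tendsto_qPochInfRatio (ht0 : 0 ≤ t) (ht1 : t < 1) :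
    Tendsto (qPochInfRatio t) atTop (𝓝 1) := by
  have h := tendsto_qPochInf_neg_rpow ht0 ht1
  exact (div_one (1 : ℝ)) ▸
    h.div (h.comp (tendsto_atTop_add_const_right _ 1 tendsto_id)) one_ne_zero

end RpowBase

/-- If `P(x)·P(x+1) = N(x) := Π_{j ∈ S} (1 + t^{x+j})` for a finite set `S ⊂ ℤ` and
`P(x) → 1` as `x → +∞`, then `P(x) = Π_{j ∈ S} (−t^{x+j}; t²)_∞ / (−t^{x+j+1}; t²)_∞`. -/
theorem functional_equation_determines_P
    (t : ℝ) (ht0 : 0 < t) (ht1 : t < 1) (S : Finset ℤ) (P : ℝ → ℝ)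
    (hfe : ∀ x : ℝ, P x * P (x + 1) = ∏ j ∈ S, (1 + t ^ (x + (j : ℝ))))
    (hlim : Tendsto P atTop (nhds 1)) :
    ∀ x : ℝ, P x = ∏ j ∈ S,
      qPochInf (-(t ^ (x + (j : ℝ)))) (t ^ 2) /
        qPochInf (-(t ^ (x + (j : ℝ) + 1))) (t ^ 2) := by
  have hsol : ∀ x, (∏ j ∈ S, qPochInfRatio t (x + j)) *
      ∏ j ∈ S, qPochInfRatio t (x + 1 + j) = ∏ j ∈ S, (1 + t ^ (x + (j : ℝ))) := fun x => by
    simp only [← Finset.prod_mul_distrib, add_right_comm x 1, qPochInfRatio_mul_add_one ht0 ht1]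
  have hne : ∀ x, ∏ j ∈ S, qPochInfRatio t (x + j) ≠ 0 := fun x =>
    Finset.prod_ne_zero_iff.mpr fun j _ => qPochInfRatio_ne_zero ht0.le ht1 _
  have htend : Tendsto (fun x => ∏ j ∈ S, qPochInfRatio t (x + j)) atTop (𝓝 1) := by
    simpa using tendsto_finsetProd S fun j _ =>
      (tendsto_qPochInfRatio ht0.le ht1).comp (tendsto_atTop_add_const_right _ (j : ℝ) tendsto_id)
  intro x
  exact congrFun (eq_of_mul_add_one_eq hne (fun x => (hfe x).trans (hsol x).symm) hlim htend) x
end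

section
/- q-Pochhammer exponential limit: let t ∈ (0,1), ζ ≤ 0, and suppose ξ = ξ(t), θ = θ(t) > 0 are related by θ = t^ξ / (1 − t²). Then as t → 1⁻, 1/(ζ t^ξ; t²)_∞ → exp(ζ θ), uniformly for θ in a compact subset of R_{≥0} and ζ ∈ R_{≤0}. -/
open Real

section Geometric

variable {a q : ℝ}

lemma summable_log_one_add_mul_pow (hq0 : 0 ≤ q) (hq1 : q < 1) :
    Summable fun k : ℕ => log (1 + a * q ^ k) :=
  summable_log_one_add_of_summable ((summable_geometric_of_lt_one hq0 hq1).mul_left a)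

lemma qPochInf_neg_eq_exp_tsum_log (ha : 0 ≤ a) (hq0 : 0 ≤ q) (hq1 : q < 1) :
    qPochInf (-a) q = exp (∑' k : ℕ, log (1 + a * q ^ k)) := by
  rw [rexp_tsum_eq_tprod (fun k => by positivity) (summable_log_one_add_mul_pow hq0 hq1)]
  exact tprod_congr fun k => by ring

lemma tsum_log_one_add_mul_pow_le (ha : 0 ≤ a) (hq0 : 0 ≤ q) (hq1 : q < 1) :
    ∑' k : ℕ, log (1 + a * q ^ k) ≤ a / (1 - q) := by
  rw [div_eq_mul_inv, ← tsum_geometric_of_lt_one hq0 hq1, ← tsum_mul_left]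
  refine (summable_log_one_add_mul_pow hq0 hq1).tsum_le_tsum (fun k => ?_)
    ((summable_geometric_of_lt_one hq0 hq1).mul_left a)
  have := log_le_sub_one_of_pos (show 0 < 1 + a * q ^ k by positivity)
  linarith

lemma div_le_tsum_log_one_add_mul_pow (ha : 0 ≤ a) (hq0 : 0 ≤ q) (hq1 : q < 1) :
    a / ((1 + a) * (1 - q)) ≤ ∑' k : ℕ, log (1 + a * q ^ k) := by
  rw [div_mul_eq_div_div, div_eq_mul_inv, ← tsum_geometric_of_lt_one hq0 hq1, ← tsum_mul_left]
  refine ((summable_geometric_of_lt_one hq0 hq1).mul_left _).tsum_le_tsum (fun k => ?_)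
    (summable_log_one_add_mul_pow hq0 hq1)
  have hx : 0 ≤ a * q ^ k := by positivity
  have hqk : a * q ^ k ≤ a := mul_le_of_le_one_right ha (pow_le_one₀ hq0 hq1.le)
  calc a / (1 + a) * q ^ k = a * q ^ k / (1 + a) := by ring
    _ ≤ a * q ^ k / (1 + a * q ^ k) := div_le_div_of_nonneg_left hx (by positivity) (by linarith)
    _ = 1 - (1 + a * q ^ k)⁻¹ := by field_simp; ring
    _ ≤ log (1 + a * q ^ k) := one_sub_inv_le_log_of_pos (by positivity)

end Geometric

lemma exp_neg_sub_exp_neg_le (x y : ℝ) :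
    exp (-x) - exp (-y) ≤ (y - x) * exp (-x) := by
  have h := add_one_le_exp (-(y - x))
  have hsplit : exp (-y) = exp (-x) * exp (-(y - x)) := by rw [← exp_add]; ring_nf
  nlinarith [exp_pos (-x)]

lemma exp_neg_inv_le {y : ℝ} (hy : 0 < y) : exp (-y⁻¹) ≤ y := by
  rw [exp_neg, inv_le_comm₀ (exp_pos _) hy]
  linarith [add_one_le_exp y⁻¹]

lemma exp_neg_div_one_add_mul_sub_exp_neg_le {e u : ℝ} (he : 0 < e) (hu : 0 ≤ u) :
    exp (-(u / (1 + e * u))) - exp (-u) ≤ 8 * e := by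
  have hpos : 0 < 1 + e * u := by positivity
  rcases le_or_gt (e * u) 1 with hsmall | hlarge
  · have hw_ge : u / 2 ≤ u / (1 + e * u) := div_le_div_of_nonneg_left hu hpos (by linarith)
    have hgap : u - u / (1 + e * u) ≤ e * u ^ 2 := by
      rw [sub_le_iff_le_add, ← sub_le_iff_le_add', le_div_iff₀ hpos]
      nlinarith [mul_nonneg he.le (pow_nonneg hu 3)]
    have hsq : u ^ 2 ≤ 8 * exp (u / 2) := by
      have := pow_div_factorial_le_exp (x := u / 2) (by positivity) 2
      norm_num [Nat.factorial] at this
      linarith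
    have hexp : exp (u / 2) * exp (-(u / 2)) = 1 := by rw [← exp_add]; simp
    calc exp (-(u / (1 + e * u))) - exp (-u)
        ≤ (u - u / (1 + e * u)) * exp (-(u / (1 + e * u))) := exp_neg_sub_exp_neg_le _ _
      _ ≤ e * u ^ 2 * exp (-(u / 2)) := by gcongr
      _ ≤ e * (8 * exp (u / 2)) * exp (-(u / 2)) := by gcongr
      _ = 8 * e := by rw [mul_assoc, mul_assoc, hexp]; ring
  · have hw_ge : (2 * e)⁻¹ ≤ u / (1 + e * u) := by
      rw [← one_div, div_le_div_iff₀ (by positivity) hpos]; nlinarith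
    calc exp (-(u / (1 + e * u))) - exp (-u)
        ≤ exp (-(2 * e)⁻¹) := by linarith [exp_le_exp.2 (neg_le_neg hw_ge), exp_pos (-u)]
      _ ≤ 2 * e := exp_neg_inv_le (by positivity)
      _ ≤ 8 * e := by linarith

lemma abs_inv_qPochInf_neg_sub_exp_neg_le {q u : ℝ} (hq0 : 0 ≤ q) (hq1 : q < 1) (hu : 0 ≤ u) :
    |(qPochInf (-((1 - q) * u)) q)⁻¹ - exp (-u)| ≤ 8 * (1 - q) := by
  have he : 0 < 1 - q := by linarith
  have ha : 0 ≤ (1 - q) * u := by positivity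
  set L := ∑' k : ℕ, log (1 + (1 - q) * u * q ^ k)
  have hL_le : L ≤ u := by
    simpa [he.ne'] using tsum_log_one_add_mul_pow_le ha hq0 hq1
  have hL_ge : u / (1 + (1 - q) * u) ≤ L := by
    have := div_le_tsum_log_one_add_mul_pow ha hq0 hq1
    rwa [show (1 - q) * u / ((1 + (1 - q) * u) * (1 - q)) = u / (1 + (1 - q) * u) by
      field_simp] at this
  rw [qPochInf_neg_eq_exp_tsum_log ha hq0 hq1, ← exp_neg,
    abs_of_nonneg (sub_nonneg.2 (exp_le_exp.2 (neg_le_neg hL_le)))]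
  linarith [exp_le_exp.2 (neg_le_neg hL_ge), exp_neg_div_one_add_mul_sub_exp_neg_le he hu]

theorem qPoch_exp_limit_general (Θ : Set ℝ) :
    ∀ ε > (0 : ℝ), ∃ δ > (0 : ℝ), ∀ t : ℝ, 0 < t → 1 - δ < t → t < 1 →
      ∀ ζ : ℝ, ζ ≤ 0 → ∀ ξ θ : ℝ, 0 < θ → θ ∈ Θ → θ = t ^ ξ / (1 - t ^ 2) →
        |(qPochInf (ζ * t ^ ξ) (t ^ 2))⁻¹ - Real.exp (ζ * θ)| < ε := by
  intro ε hε
  refine ⟨ε / 16, by positivity, fun t ht0 htδ ht1 ζ hζ ξ θ hθ _ hθt => ?_⟩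
  have hq1 : t ^ 2 < 1 := by nlinarith
  have hu : 0 ≤ -(ζ * θ) := by nlinarith
  have ha : ζ * t ^ ξ = -((1 - t ^ 2) * -(ζ * θ)) := by
    rw [hθt]; field_simp [(sub_pos.2 hq1).ne']
  have hbound := abs_inv_qPochInf_neg_sub_exp_neg_le (sq_nonneg t) hq1 hu
  rw [← ha, neg_neg] at hbound
  nlinarith

/-- q-Pochhammer exponential limit: if `θ = t^ξ / (1 − t²)` then, as `t → 1⁻`,
`1/(ζ t^ξ; t²)_∞ → exp(ζ θ)`, uniformly for `θ` in a compact subset of `ℝ_{≥0}`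
and `ζ ∈ ℝ_{≤0}`. -/
theorem qPoch_exp_limit (Θ : Set ℝ) (hΘc : IsCompact Θ) (hΘ : Θ ⊆ Set.Ici (0 : ℝ)) :
    ∀ ε > (0 : ℝ), ∃ δ > (0 : ℝ), ∀ t : ℝ, 0 < t → 1 - δ < t → t < 1 →
      ∀ ζ : ℝ, ζ ≤ 0 → ∀ ξ θ : ℝ, 0 < θ → θ ∈ Θ → θ = t ^ ξ / (1 - t ^ 2) →
        |(qPochInf (ζ * t ^ ξ) (t ^ 2))⁻¹ - Real.exp (ζ * θ)| < ε :=
  qPoch_exp_limit_general Θ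
end

section
/- Exponential bound on the h-function: let t ∈ (0,1), ζ < 0, and h(s) = (ζ t^{s+1}; t²)_∞/(ζ t^{s}; t²)_∞ − 1. Then h takes values in (−1, 0), and for t = e^{−ε} and s = −ε^{-1}x (x ∈ R), one has |h(s)| ≤ |ζ| e^{x}. -/
/-- `h(s) = (ζ t^{s+1}; t²)_∞ / (ζ t^{s}; t²)_∞ − 1`. -/
noncomputable def hFun (t ζ s : ℝ) : ℝ :=
  qPochInf (ζ * t ^ (s + 1)) (t ^ 2) / qPochInf (ζ * t ^ s) (t ^ 2) - 1

open Real Set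

section qPochInf

variable {a b q : ℝ}

lemma summable_mul_pow (a : ℝ) (hq : |q| < 1) : Summable fun k : ℕ => a * q ^ k :=
  (summable_geometric_of_abs_lt_one hq).mul_left a

lemma multipliable_one_sub_mul_pow (a : ℝ) (hq : |q| < 1) :
    Multipliable fun k : ℕ => 1 - a * q ^ k := by
  simpa only [sub_eq_add_neg] using
    Real.multipliable_one_add_of_summable (summable_mul_pow a hq).neg

lemma summable_log_one_sub_mul_pow (a : ℝ) (hq : |q| < 1) :
    Summable fun k : ℕ => log (1 - a * q ^ k) := by
  simpa only [sub_eq_add_neg] using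
    Real.summable_log_one_add_of_summable (summable_mul_pow a hq).neg

lemma qPochInf_eq_one_sub_mul (a : ℝ) (hq : |q| < 1) :
    qPochInf a q = (1 - a) * qPochInf (a * q) q := by
  have h := multipliable_one_sub_mul_pow (a * q) hq
  simp only [mul_assoc, ← pow_succ'] at h
  unfold qPochInf
  rw [tprod_eq_zero_mul' (f := fun k => 1 - a * q ^ k) h]
  simp only [pow_zero, mul_one, mul_assoc, ← pow_succ']

lemma one_sub_mul_pow_pos (ha : a ≤ 0) (hq : 0 ≤ q) (k : ℕ) : 0 < 1 - a * q ^ k := by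
  nlinarith [mul_nonpos_of_nonpos_of_nonneg ha (pow_nonneg hq k)]

lemma qPochInf_eq_exp_tsum_log (ha : a ≤ 0) (hq0 : 0 ≤ q) (hq1 : q < 1) :
    qPochInf a q = exp (∑' k : ℕ, log (1 - a * q ^ k)) := by
  have hq : |q| < 1 := abs_lt.mpr ⟨by linarith, hq1⟩
  exact (rexp_tsum_eq_tprod (one_sub_mul_pow_pos ha hq0) (summable_log_one_sub_mul_pow a hq)).symm

lemma qPochInf_pos (ha : a ≤ 0) (hq0 : 0 ≤ q) (hq1 : q < 1) : 0 < qPochInf a q := by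
  rw [qPochInf_eq_exp_tsum_log ha hq0 hq1]
  exact exp_pos _

lemma qPochInf_strictAntiOn (hq0 : 0 ≤ q) (hq1 : q < 1) :
    StrictAntiOn (qPochInf · q) (Iic 0) := by
  intro a' ha' a ha haa'
  have hq : |q| < 1 := abs_lt.mpr ⟨by linarith, hq1⟩
  have hlog : ∀ k : ℕ, log (1 - a * q ^ k) ≤ log (1 - a' * q ^ k) := fun k =>
    log_le_log (one_sub_mul_pow_pos ha hq0 k) (by nlinarith [pow_nonneg hq0 k])
  have hlog0 : log (1 - a * q ^ 0) < log (1 - a' * q ^ 0) :=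
    log_lt_log (one_sub_mul_pow_pos ha hq0 0) (by simpa using haa')
  simp only [qPochInf_eq_exp_tsum_log ha hq0 hq1, qPochInf_eq_exp_tsum_log ha' hq0 hq1]
  exact exp_lt_exp.mpr (Summable.tsum_lt_tsum hlog hlog0 (summable_log_one_sub_mul_pow a hq)
    (summable_log_one_sub_mul_pow a' hq))

lemma qPochInf_mul_div_lt_one (ha : a < 0) (hb0 : 0 ≤ b) (hb1 : b < 1) (hq0 : 0 ≤ q)
    (hq1 : q < 1) : qPochInf (a * b) q / qPochInf a q < 1 := by
  have hab : a < a * b := by nlinarith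
  rw [div_lt_one (qPochInf_pos ha.le hq0 hq1)]
  exact qPochInf_strictAntiOn hq0 hq1 ha.le (mul_nonpos_of_nonpos_of_nonneg ha.le hb0) hab

lemma inv_one_sub_le_qPochInf_mul_div (ha : a ≤ 0) (hqb : q ≤ b) (hq0 : 0 ≤ q) (hq1 : q < 1) :
    (1 - a)⁻¹ ≤ qPochInf (a * b) q / qPochInf a q := by
  have hq : |q| < 1 := abs_lt.mpr ⟨by linarith, hq1⟩
  have hab : a * b ≤ a * q := mul_le_mul_of_nonpos_left hqb ha
  have haq : a * q ≤ 0 := mul_nonpos_of_nonpos_of_nonneg ha hq0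
  have hP : qPochInf (a * q) q ≤ qPochInf (a * b) q :=
    (qPochInf_strictAntiOn hq0 hq1).antitoneOn (hab.trans haq) haq hab
  rw [inv_eq_one_div, div_le_div_iff₀ (by linarith) (qPochInf_pos ha hq0 hq1), one_mul,
    qPochInf_eq_one_sub_mul a hq, mul_comm]
  gcongr
  linarith

end qPochInf

section hFun

variable {t ζ : ℝ}

lemma hFun_add_one (ht : 0 < t) (s : ℝ) :
    hFun t ζ s + 1 = qPochInf (ζ * t ^ s * t) (t ^ 2) / qPochInf (ζ * t ^ s) (t ^ 2) := by
  rw [hFun, rpow_add_one ht.ne', mul_assoc, sub_add_cancel]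

lemma hFun_mem_Ioo (ht0 : 0 < t) (ht1 : t < 1) (hζ : ζ < 0) (s : ℝ) :
    hFun t ζ s ∈ Ioo (-1) 0 := by
  have ha : ζ * t ^ s < 0 := mul_neg_of_neg_of_pos hζ (rpow_pos_of_pos ht0 s)
  have hq0 : 0 ≤ t ^ 2 := by positivity
  have hq1 : t ^ 2 < 1 := by nlinarith
  have hpos : 0 < hFun t ζ s + 1 := by
    rw [hFun_add_one ht0]
    exact div_pos (qPochInf_pos (by nlinarith) hq0 hq1) (qPochInf_pos ha.le hq0 hq1)
  have hlt : hFun t ζ s + 1 < 1 := by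
    rw [hFun_add_one ht0]
    exact qPochInf_mul_div_lt_one ha ht0.le ht1 hq0 hq1
  constructor <;> linarith

lemma abs_hFun_le (ht0 : 0 < t) (ht1 : t < 1) (hζ : ζ < 0) (s : ℝ) :
    |hFun t ζ s| ≤ |ζ| * t ^ s := by
  set a := ζ * t ^ s
  have ha : a ≤ 0 := mul_nonpos_of_nonpos_of_nonneg hζ.le (rpow_nonneg ht0.le s)
  have hR : (1 - a)⁻¹ ≤ hFun t ζ s + 1 := by
    rw [hFun_add_one ht0]
    exact inv_one_sub_le_qPochInf_mul_div ha (by nlinarith) (by positivity) (by nlinarith)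
  have hinv : 1 + a ≤ (1 - a)⁻¹ := by
    rw [inv_eq_one_div, le_div_iff₀ (by linarith)]
    nlinarith
  rw [abs_of_neg (hFun_mem_Ioo ht0 ht1 hζ s).2, abs_of_neg hζ]
  linarith

end hFun

/-- Exponential bound on the `h`-function: for `t ∈ (0,1)` and `ζ < 0`, `h` takes
values in `(−1,0)`, and for `t = e^{−ε}` and `s = −ε⁻¹x`, `|h(s)| ≤ |ζ| eˣ`. -/
theorem hFun_bounds (t : ℝ) (ht0 : 0 < t) (ht1 : t < 1) (ζ : ℝ) (hζ : ζ < 0) :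
    (∀ s : ℝ, hFun t ζ s ∈ Set.Ioo (-1 : ℝ) 0) ∧
    (∀ ε x : ℝ, 0 < ε → t = Real.exp (-ε) →
      |hFun t ζ (-(ε⁻¹) * x)| ≤ |ζ| * Real.exp x) := by
  refine ⟨hFun_mem_Ioo ht0 ht1 hζ, fun ε x hε ht => ?_⟩
  have hts : t ^ (-(ε⁻¹) * x) = exp x := by
    rw [ht, ← exp_mul]
    congr 1
    field_simp
  simpa only [hts] using abs_hFun_le ht0 ht1 hζ (-(ε⁻¹) * x)
end
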